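/- arXiv:1412.0232 — 4 statements merged into one kernel-verified Lean document; each statement's English description precedes it below -/
import Mathlib

section
/- Let p be a prime, r a natural number, and j₀, j₁, …, j_{r−1} natural numbers with 0 ≤ j_l < p for each l. Set n = Σ_{l=0}^{r−1} j_l · p^l. Then the product Π_{l=0}^{r−1} ((p^l)!)^{j_l} divides n!, and the multinomial coefficient n! / Π_{l=0}^{r−1} ((p^l)!)^{j_l} (i.e., the multinomial coefficient of partitioning n into j₀ parts of size p⁰ = 1, j₁ parts of size p, …, j_{r−1} parts of size p^{r−1}) is congruent to Π_{l=0}^{r−1} (j_l)! modulo p. -/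
private lemma lucas_digit (p : ℕ) (hp : p.Prime) :
    ∀ (r a c : ℕ), a < p ^ r → c < p →
      Nat.choose (a + c * p ^ r) (p ^ r) ≡ c [MOD p] := by
  haveI : Fact p.Prime := ⟨hp⟩
  intro r
  induction r with
  | zero =>
    intro a c ha hc
    rw [pow_zero] at ha
    obtain rfl : a = 0 := by omega
    simp [Nat.choose_one_right, Nat.ModEq.refl]
  | succ r ih =>
    intro a c ha hc
    refine (Choose.choose_modEq_choose_mod_mul_choose_div_nat).trans ?_
    have h1 : (a + c * p ^ (r + 1)) % p = a % p := by
      rw [pow_succ, ← mul_assoc, Nat.add_mul_mod_self_right]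
    have h2 : (a + c * p ^ (r + 1)) / p = a / p + c * p ^ r := by
      rw [pow_succ, ← mul_assoc, Nat.add_mul_div_right _ _ hp.pos]
    have h3 : (p ^ (r + 1)) % p = 0 := by
      rw [pow_succ, Nat.mul_mod_left]
    have h4 : (p ^ (r + 1)) / p = p ^ r := by
      rw [pow_succ, Nat.mul_div_cancel _ hp.pos]
    rw [h1, h2, h3, h4, Nat.choose_zero_right, one_mul]
    exact ih (a / p) c (Nat.div_lt_of_lt_mul (by rwa [← pow_succ'])) hc

private lemma modeq_prod (p : ℕ) (s : Finset ℕ) (f g : ℕ → ℕ)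
    (h : ∀ i ∈ s, f i ≡ g i [MOD p]) :
    (∏ i ∈ s, f i) ≡ (∏ i ∈ s, g i) [MOD p] := by
  have h' : ∀ i ∈ s, ((f i : ZMod p)) = (g i : ZMod p) :=
    fun i hi => (ZMod.natCast_eq_natCast_iff _ _ _).mpr (h i hi)
  rw [← ZMod.natCast_eq_natCast_iff]
  push_cast
  exact Finset.prod_congr rfl h'

private lemma quot_eq (a b : ℕ) :
    ∀ k : ℕ, (∏ i ∈ Finset.range k, Nat.choose (a + (i + 1) * b) b) *
      ((Nat.factorial b) ^ k * Nat.factorial a) = Nat.factorial (a + k * b) := by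
  intro k
  induction k with
  | zero => simp
  | succ k ih =>
    rw [Finset.prod_range_succ, pow_succ]
    have key := Nat.add_choose_mul_factorial_mul_factorial (a + k * b) b
    calc (∏ i ∈ Finset.range k, Nat.choose (a + (i + 1) * b) b) *
          Nat.choose (a + (k + 1) * b) b *
          (Nat.factorial b ^ k * Nat.factorial b * Nat.factorial a)
        = Nat.choose (a + k * b + b) b * ((∏ i ∈ Finset.range k, Nat.choose (a + (i + 1) * b) b) *
            (Nat.factorial b ^ k * Nat.factorial a)) * Nat.factorial b := by
          have : a + (k + 1) * b = a + k * b + b := by ring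
          rw [this]; ring
      _ = Nat.choose (a + k * b + b) b * Nat.factorial (a + k * b) * Nat.factorial b := by
          rw [ih]
      _ = Nat.factorial (a + k * b + b) := key
      _ = Nat.factorial (a + (k + 1) * b) := by ring_nf

/-- If `n = ∑ l < r, jₗ pˡ` with `0 ≤ jₗ < p` (base-`p` digits), then
`∏ l, ((pˡ)!)^(jₗ)` divides `n!`, and the multinomial coefficient
`n! / ∏ l, ((pˡ)!)^(jₗ)` is congruent to `∏ l, (jₗ)!` modulo `p`. -/
theorem multinomial_of_base_p_digits_modEq
    (p : ℕ) (hp : p.Prime) (r : ℕ) (j : ℕ → ℕ) (hj : ∀ l < r, j l < p)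
    (n : ℕ) (hn : n = ∑ l ∈ Finset.range r, j l * p ^ l) :
    (∏ l ∈ Finset.range r, (Nat.factorial (p ^ l)) ^ (j l)) ∣ Nat.factorial n ∧
    Nat.ModEq p
      (Nat.factorial n / ∏ l ∈ Finset.range r, (Nat.factorial (p ^ l)) ^ (j l))
      (∏ l ∈ Finset.range r, Nat.factorial (j l)) := by
  subst hn
  suffices H : ∀ r : ℕ, (∀ l < r, j l < p) →
      (∑ l ∈ Finset.range r, j l * p ^ l) < p ^ r ∧
      (∏ l ∈ Finset.range r, (Nat.factorial (p ^ l)) ^ (j l)) ∣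
        Nat.factorial (∑ l ∈ Finset.range r, j l * p ^ l) ∧
      Nat.ModEq p
        (Nat.factorial (∑ l ∈ Finset.range r, j l * p ^ l) /
          ∏ l ∈ Finset.range r, (Nat.factorial (p ^ l)) ^ (j l))
        (∏ l ∈ Finset.range r, Nat.factorial (j l)) by
    exact ⟨(H r hj).2.1, (H r hj).2.2⟩
  clear hj
  intro r
  induction r with
  | zero => simp [Nat.ModEq.refl]
  | succ r ih =>
    intro hj
    obtain ⟨hlt, hdvd, hmod⟩ := ih (fun l hl => hj l (hl.trans (Nat.lt_succ_self r)))
    set a := ∑ l ∈ Finset.range r, j l * p ^ l with ha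
    set D := ∏ l ∈ Finset.range r, (Nat.factorial (p ^ l)) ^ (j l) with hD
    have hDpos : 0 < D := Finset.prod_pos fun l _ => pow_pos (Nat.factorial_pos _) _
    have hjr : j r < p := hj r (Nat.lt_succ_self r)
    rw [Finset.sum_range_succ, Finset.prod_range_succ, Finset.prod_range_succ]
    rw [← ha, ← hD]
    set Q := ∏ i ∈ Finset.range (j r), Nat.choose (a + (i + 1) * p ^ r) (p ^ r) with hQdef
    have hQ : Q * ((Nat.factorial (p ^ r)) ^ (j r) * Nat.factorial a)
        = Nat.factorial (a + j r * p ^ r) := quot_eq a (p ^ r) (j r)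
    have hcancel : Nat.factorial a / D * D = Nat.factorial a := Nat.div_mul_cancel hdvd
    have keyfac : Nat.factorial (a + j r * p ^ r)
        = (Q * (Nat.factorial a / D)) * (D * (Nat.factorial (p ^ r)) ^ (j r)) := by
      rw [← hQ]
      conv_lhs => rw [← hcancel]
      ring
    have hlt' : a + j r * p ^ r < p ^ (r + 1) := by
      have h1 : j r * p ^ r ≤ (p - 1) * p ^ r :=
        Nat.mul_le_mul_right _ (Nat.le_sub_one_of_lt hjr)
      have h2 : a + j r * p ^ r < p ^ r + (p - 1) * p ^ r :=
        Nat.add_lt_add_of_lt_of_le hlt h1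
      have h3 : p ^ r + (p - 1) * p ^ r = p ^ (r + 1) := by
        obtain ⟨q, hq⟩ : ∃ q, p = q + 1 := ⟨p - 1, by have := hp.pos; omega⟩
        subst hq
        rw [Nat.succ_sub_one, pow_succ]; ring
      omega
    have hEpos : 0 < D * (Nat.factorial (p ^ r)) ^ (j r) :=
      Nat.mul_pos hDpos (pow_pos (Nat.factorial_pos _) _)
    have hdiv : Nat.factorial (a + j r * p ^ r) / (D * (Nat.factorial (p ^ r)) ^ (j r))
        = Q * (Nat.factorial a / D) := by
      rw [keyfac, Nat.mul_div_cancel _ hEpos]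
    refine ⟨hlt', ⟨_, keyfac.trans (mul_comm _ _)⟩, ?_⟩
    rw [hdiv]
    have hQmod : Q ≡ Nat.factorial (j r) [MOD p] := by
      have : Q ≡ ∏ i ∈ Finset.range (j r), (i + 1) [MOD p] := by
        apply modeq_prod
        intro i hi
        have hi' : i + 1 < p := by
          have := Finset.mem_range.mp hi; omega
        exact lucas_digit p hp r a (i + 1) hlt hi'
      rwa [Finset.prod_range_add_one_eq_factorial] at this
    calc Q * (Nat.factorial a / D)
        ≡ Nat.factorial (j r) * (∏ l ∈ Finset.range r, Nat.factorial (j l)) [MOD p] :=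
          hQmod.mul hmod
      _ = (∏ l ∈ Finset.range r, Nat.factorial (j l)) * Nat.factorial (j r) := mul_comm _ _
end

section
/- Let R be a commutative ring equipped with a ℤ-grading by additive subgroups 𝒜(i), i ∈ ℤ, making R a graded ring (each element decomposes uniquely as a finite sum of homogeneous components, 1 ∈ 𝒜(0), and 𝒜(i)·𝒜(j) ⊆ 𝒜(i+j)); in particular 𝒜(0) is a subring of R. Then R is a Noetherian ring if and only if 𝒜(0) is a Noetherian ring and R is finitely generated as an 𝒜(0)-algebra. -/
/-!
Multiplication by a homogeneous `z` of degree `d` shifts degrees by `d`, so for `x ∈ 𝒜 n` and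
`x = ∑ cᵢ zᵢ` with `zᵢ ∈ 𝒜 dᵢ`, taking degree `n` components gives `x = ∑ (cᵢ)_{n - dᵢ} zᵢ`.
In degree `0` this says that extending ideals from `𝒜 0` to `R` is injective, so `𝒜 0` inherits
the ascending chain condition. By the chain condition, the ideals generated by the homogeneous
elements of positive (negative) degree are already generated in degrees `d` with `|d| ≤ D`, and
each `𝒜 n` is a finitely generated `𝒜 0`-module. For `|n| > D` the formula above writes `x ∈ 𝒜 n`
through elements of degrees of absolute value less than `|n|`, so finite generating sets of the
`𝒜 n` with `|n| ≤ D` generate `R` as an `𝒜 0`-algebra. The converse is the Hilbert basis theorem.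
-/

open DirectSum Filter

theorem Ideal.eventually_subset_span_natAbs_le {R : Type*} [CommSemiring R] [IsNoetherianRing R]
    (s : ℤ → Set R) (p : ℤ → Prop) :
    ∀ᶠ D : ℕ in atTop, ∀ n, p n → s n ⊆ Ideal.span {z | ∃ d, p d ∧ d.natAbs ≤ D ∧ z ∈ s d} := by
  let I : ℕ →o Ideal R :=
    ⟨fun k => Ideal.span {z | ∃ d, p d ∧ d.natAbs ≤ k ∧ z ∈ s d}, fun k l hkl =>
      Ideal.span_mono fun z ⟨d, hd, hdk, hz⟩ => ⟨d, hd, hdk.trans hkl, hz⟩⟩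
  obtain ⟨D, hD⟩ := WellFoundedGT.monotone_chain_condition I
  refine eventually_atTop.2 ⟨D, fun k hk n hn x hx => ?_⟩
  have hx' : x ∈ I (max D n.natAbs) := Ideal.subset_span ⟨n, hn, le_max_right _ _, hx⟩
  rwa [← hD _ (le_max_left _ _), hD k hk] at hx'

namespace GradedRing

section AddGroup

variable {ι R σ : Type*} [DecidableEq ι] [AddGroup ι] [CommSemiring R] [SetLike σ R]
  [AddSubmonoidClass σ R] (𝒜 : ι → σ) [GradedRing 𝒜]

theorem mem_of_mem_grade_of_mem_span (P : AddSubmonoid R) {s : Set R} {n : ι}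
    (hs : ∀ z ∈ s, ∃ d, z ∈ 𝒜 d ∧ ∀ a ∈ 𝒜 (n - d), a * z ∈ P) {x : R} (hx : x ∈ 𝒜 n)
    (hxs : x ∈ Ideal.span s) : x ∈ P := by
  classical
  obtain ⟨c, hc, rfl⟩ := Submodule.mem_span_set.mp hxs
  rw [← decompose_of_mem_same 𝒜 hx, Finsupp.sum, decompose_sum, DFinsupp.finsetSum_apply,
    AddSubmonoidClass.coe_finsetSum]
  refine sum_mem fun z hz => ?_
  obtain ⟨d, hzd, hP⟩ := hs z (hc hz)
  rw [smul_eq_mul, ← sub_add_cancel n d, coe_decompose_mul_add_of_right_mem 𝒜 hzd]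
  exact hP _ (SetLike.coe_mem _)

theorem comap_map_algebraMap_gradeZero (J : Ideal (𝒜 0)) :
    (J.map (algebraMap (𝒜 0) R)).comap (algebraMap (𝒜 0) R) = J := by
  refine le_antisymm (fun x hx => ?_) Ideal.le_comap_map
  have hxJ : (x : R) ∈ J.toAddSubmonoid.map (AddSubmonoidClass.subtype (𝒜 0)) := by
    refine mem_of_mem_grade_of_mem_span 𝒜 _ ?_ x.2 hx
    rintro _ ⟨j, hj, rfl⟩
    exact ⟨0, j.2, fun a ha => ⟨⟨a, by simpa using ha⟩ * j, J.mul_mem_left _ hj, rfl⟩⟩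
  obtain ⟨y, hy, hyx⟩ := hxJ
  rwa [← Subtype.ext hyx]

theorem isNoetherianRing_gradeZero [IsNoetherianRing R] : IsNoetherianRing (𝒜 0) := by
  rw [isNoetherianRing_iff, isNoetherian_iff']
  have hinj : Function.Injective (Ideal.map (algebraMap (𝒜 0) R)) :=
    Function.LeftInverse.injective (comap_map_algebraMap_gradeZero 𝒜)
  exact (Monotone.strictMono_of_injective (fun _ _ => Ideal.map_mono) hinj).wellFoundedGT

theorem grade_subset_of_subset_span (S : Subsemiring R) {s : Set R} {n : ι}
    (hs : ∀ z ∈ s, ∃ d, z ∈ 𝒜 d ∧ z ∈ S ∧ (𝒜 (n - d) : Set R) ⊆ S)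
    (hspan : (𝒜 n : Set R) ⊆ Ideal.span s) : (𝒜 n : Set R) ⊆ S := by
  refine fun x hx => mem_of_mem_grade_of_mem_span 𝒜 S.toAddSubmonoid (fun z hz => ?_) hx (hspan hx)
  obtain ⟨d, hzd, hzS, hS⟩ := hs z hz
  exact ⟨d, hzd, fun a ha => S.mul_mem (hS ha) hzS⟩

end AddGroup

section Int

variable {R σ : Type*} [CommSemiring R] [SetLike σ R] [AddSubmonoidClass σ R] (𝒜 : ℤ → σ)
  [GradedRing 𝒜]

theorem grade_subset_of_natAbs_le (S : Subsemiring R) {D : ℕ}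
    (hsmall : ∀ n : ℤ, n.natAbs ≤ D → (𝒜 n : Set R) ⊆ S)
    (hpos : ∀ n, 0 < n → (𝒜 n : Set R) ⊆ Ideal.span {z | ∃ d, 0 < d ∧ d.natAbs ≤ D ∧ z ∈ 𝒜 d})
    (hneg : ∀ n, n < 0 → (𝒜 n : Set R) ⊆ Ideal.span {z | ∃ d, d < 0 ∧ d.natAbs ≤ D ∧ z ∈ 𝒜 d})
    (n : ℤ) : (𝒜 n : Set R) ⊆ S := by
  induction h : n.natAbs using Nat.strong_induction_on generalizing n with
  | _ N ih =>
    subst h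
    by_cases hn : n.natAbs ≤ D
    · exact hsmall n hn
    -- a generator of degree `d` with the sign of `n` and `|d| ≤ D < |n|` leaves `|n - d| < |n|`
    obtain ⟨q, hq, hspan⟩ : ∃ q : ℤ → Prop,
        (∀ d, q d → d.natAbs ≤ D → (n - d).natAbs < n.natAbs) ∧
        (𝒜 n : Set R) ⊆ Ideal.span {z | ∃ d, q d ∧ d.natAbs ≤ D ∧ z ∈ 𝒜 d} := by
      rcases lt_or_gt_of_ne (show n ≠ 0 by omega) with hn0 | hn0
      · exact ⟨(· < 0), fun d hd _ => by omega, hneg n hn0⟩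
      · exact ⟨(0 < ·), fun d hd _ => by omega, hpos n hn0⟩
    refine grade_subset_of_subset_span 𝒜 S ?_ hspan
    rintro z ⟨d, hd, hdD, hz⟩
    exact ⟨d, hz, hsmall d hdD hz, ih _ (hq d hd hdD) _ rfl⟩

theorem finiteType_of_isNoetherianRing [IsNoetherianRing R] : Algebra.FiniteType (𝒜 0) R := by
  classical
  obtain ⟨D, hpos, hneg⟩ := ((Ideal.eventually_subset_span_natAbs_le (fun n => (𝒜 n : Set R))
    (0 < ·)).and (Ideal.eventually_subset_span_natAbs_le (fun n => (𝒜 n : Set R)) (· < 0))).exists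
  choose G hG hspan using fun n => (Submodule.fg_span_iff_fg_span_finset_subset (R := R)
    (𝒜 n : Set R)).1 (IsNoetherian.noetherian _)
  let t := (Finset.Icc (-D : ℤ) D).biUnion G
  let A := Algebra.adjoin (𝒜 0) (t : Set R)
  have hsmall (n : ℤ) (hn : n.natAbs ≤ D) : (𝒜 n : Set R) ⊆ A.toSubsemiring := by
    refine grade_subset_of_subset_span 𝒜 _ (fun z hz => ⟨n, hG n hz, ?_, ?_⟩)
      (Submodule.subset_span.trans (hspan n).le)
    · exact Algebra.subset_adjoin (Finset.mem_biUnion.2 ⟨n, by simp; omega, hz⟩)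
    · exact fun a ha => A.algebraMap_mem ⟨a, by simpa using ha⟩
  have hgrade := grade_subset_of_natAbs_le 𝒜 A.toSubsemiring hsmall hpos hneg
  refine ⟨⟨t, eq_top_iff.2 fun x _ => ?_⟩⟩
  rw [← sum_support_decompose 𝒜 x]
  exact sum_mem fun n _ => hgrade n (SetLike.coe_mem _)

end Int

end GradedRing

/-- (P. Samuel) A `ℤ`-graded commutative ring `R` is Noetherian if and only if its
degree-zero part `𝒜 0` is Noetherian and `R` is a finitely generated `𝒜 0`-algebra. -/
theorem noetherian_iff_gradeZero_noetherian_and_finiteType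
    (R : Type*) [CommRing R] (𝒜 : ℤ → AddSubgroup R) [GradedRing 𝒜] :
    letI : Algebra (𝒜 0) R := (SetLike.GradeZero.subring 𝒜).subtype.toAlgebra
    (IsNoetherianRing R ↔
      IsNoetherianRing (𝒜 0) ∧ Algebra.FiniteType (𝒜 0) R) := by
  let _ : Algebra (𝒜 0) R := (SetLike.GradeZero.subring 𝒜).subtype.toAlgebra
  exact ⟨fun _ => ⟨GradedRing.isNoetherianRing_gradeZero 𝒜,
      GradedRing.finiteType_of_isNoetherianRing 𝒜⟩,
    fun ⟨_, _⟩ => Algebra.FiniteType.isNoetherianRing (𝒜 0) R⟩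
end

section
/- Let R be a ring with a ℤ-grading 𝒜 making it a graded ring, and let M, N, P be graded R-modules (with gradings ℳ, 𝒩, 𝒫 respectively). Suppose P is projective as an (ungraded) R-module. Then P satisfies the graded lifting property: for every surjective R-linear map f : M → N that is degree-preserving (f(ℳ(i)) ⊆ 𝒩(i) for all i) and every degree-preserving R-linear map g : P → N (g(𝒫(i)) ⊆ 𝒩(i) for all i), there exists a degree-preserving R-linear map h : P → M (h(𝒫(i)) ⊆ ℳ(i) for all i) such that f ∘ h = g. -/
/-
Lift `g` along `f` to some linear `h₀ : P → M` by projectivity, then replace `h₀` by its degree-zero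
part `x ↦ ∑ i, (h₀ xᵢ)ᵢ`. This part is again `R`-linear because a homogeneous scalar of degree `d`
shifts every component by `d`, it is degree-preserving by construction, and taking degree-zero
parts commutes with composition by the degree-preserving `f` and fixes the degree-preserving `g`.
-/

namespace DirectSum

section AddCommMonoid

variable {ι M N P σM σN σP : Type*} [DecidableEq ι]
  [AddCommMonoid M] [SetLike σM M] [AddSubmonoidClass σM M] (ℳ : ι → σM) [Decomposition ℳ]
  [AddCommMonoid N] [SetLike σN N] [AddSubmonoidClass σN N] (𝒩 : ι → σN) [Decomposition 𝒩]
  [AddCommMonoid P] [SetLike σP P] [AddSubmonoidClass σP P] (𝓟 : ι → σP) [Decomposition 𝓟]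

theorem decompose_addHom_ext {f g : P →+ M}
    (h : ∀ i, ∀ x ∈ 𝓟 i, f x = g x) : f = g := by
  ext x
  induction x using Decomposition.inductionOn 𝓟 with
  | zero => simp
  | homogeneous x => exact h _ x x.2
  | add a b ha hb => rw [map_add, map_add, ha, hb]

theorem coe_decompose_map_of_forall_mem {F : Type*} [FunLike F M N] [AddMonoidHomClass F M N]
    (f : F) (hf : ∀ i, ∀ m ∈ ℳ i, f m ∈ 𝒩 i) (m : M) (i : ι) :
    f (decompose ℳ m i) = decompose 𝒩 (f m) i := by
  induction m using Decomposition.inductionOn ℳ with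
  | zero => simp
  | @homogeneous j m =>
    obtain rfl | hij := eq_or_ne j i
    · rw [decompose_of_mem_same ℳ m.2, decompose_of_mem_same 𝒩 (hf _ _ m.2)]
    · rw [decompose_of_mem_ne ℳ m.2 hij, decompose_of_mem_ne 𝒩 (hf _ _ m.2) hij, map_zero]
  | add a b ha hb => simp only [map_add, decompose_add, add_apply, AddMemClass.coe_add, ha, hb]

/-- The degree-zero part `x ↦ ∑ i, (h xᵢ)ᵢ` of an additive map between graded monoids. -/
def degreeZeroPart (h : P →+ M) : P →+ M :=
  (toAddMonoid fun i => (AddSubmonoidClass.subtype (ℳ i)).comp <|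
      (DFinsupp.evalAddMonoidHom i).comp <| (decomposeAddEquiv ℳ).toAddMonoidHom.comp <|
        h.comp (AddSubmonoidClass.subtype (𝓟 i))).comp
    (decomposeAddEquiv 𝓟).toAddMonoidHom

variable {ℳ 𝒩 𝓟}

theorem degreeZeroPart_apply_of_mem (h : P →+ M) {i : ι} {x : P} (hx : x ∈ 𝓟 i) :
    degreeZeroPart ℳ 𝓟 h x = decompose ℳ (h x) i := by
  simp only [degreeZeroPart, AddMonoidHom.comp_apply, AddEquiv.coe_toAddMonoidHom,
    decomposeAddEquiv_apply, decompose_of_mem 𝓟 hx, toAddMonoid_of]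
  rfl

theorem degreeZeroPart_mem (h : P →+ M) {i : ι} {x : P} (hx : x ∈ 𝓟 i) :
    degreeZeroPart ℳ 𝓟 h x ∈ ℳ i := by
  rw [degreeZeroPart_apply_of_mem h hx]
  exact SetLike.coe_mem _

theorem comp_degreeZeroPart (f : M →+ N) (hf : ∀ i, ∀ m ∈ ℳ i, f m ∈ 𝒩 i) (h : P →+ M) :
    f.comp (degreeZeroPart ℳ 𝓟 h) = degreeZeroPart 𝒩 𝓟 (f.comp h) :=
  decompose_addHom_ext 𝓟 fun i x hx => by
    simp only [AddMonoidHom.comp_apply, degreeZeroPart_apply_of_mem _ hx,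
      coe_decompose_map_of_forall_mem ℳ 𝒩 f hf]

theorem degreeZeroPart_eq_self {g : P →+ N} (hg : ∀ i, ∀ x ∈ 𝓟 i, g x ∈ 𝒩 i) :
    degreeZeroPart 𝒩 𝓟 g = g :=
  decompose_addHom_ext 𝓟 fun _ x hx => by
    rw [degreeZeroPart_apply_of_mem g hx, decompose_of_mem_same 𝒩 (hg _ x hx)]

end AddCommMonoid

section Module

variable {ι R M P σR σM σP : Type*} [DecidableEq ι] [AddLeftCancelMonoid ι] [Semiring R]
  [SetLike σR R] [AddCommMonoid M] [Module R M] [SetLike σM M] [AddSubmonoidClass σM M]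
  [AddCommMonoid P] [Module R P] [SetLike σP P] [AddSubmonoidClass σP P]

theorem coe_decompose_smul_add_of_mem {𝒜 : ι → σR} (ℳ : ι → σM) [Decomposition ℳ]
    [SetLike.GradedSMul 𝒜 ℳ] {d : ι} {r : R} (hr : r ∈ 𝒜 d) (m : M) (i : ι) :
    (decompose ℳ (r • m) (d + i) : M) = r • (decompose ℳ m i : M) := by
  induction m using Decomposition.inductionOn ℳ with
  | zero => simp
  | @homogeneous j m =>
    have hrm : r • (m : M) ∈ ℳ (d + j) := SetLike.GradedSMul.smul_mem hr m.2
    obtain rfl | hij := eq_or_ne j i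
    · rw [decompose_of_mem_same ℳ m.2, decompose_of_mem_same ℳ hrm]
    · rw [decompose_of_mem_ne ℳ m.2 hij, decompose_of_mem_ne ℳ hrm (by simpa using hij),
        smul_zero]
  | add a b ha hb =>
    simp only [smul_add, decompose_add, add_apply, AddMemClass.coe_add, ha, hb]

theorem degreeZeroPart_map_smul [AddSubmonoidClass σR R] (𝒜 : ι → σR) [GradedRing 𝒜]
    (ℳ : ι → σM) [Decomposition ℳ] [SetLike.GradedSMul 𝒜 ℳ]
    (𝓟 : ι → σP) [Decomposition 𝓟] [SetLike.GradedSMul 𝒜 𝓟] (h : P →ₗ[R] M) (r : R) (x : P) :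
    degreeZeroPart ℳ 𝓟 h.toAddMonoidHom (r • x) = r • degreeZeroPart ℳ 𝓟 h.toAddMonoidHom x := by
  induction r using Decomposition.inductionOn 𝒜 with
  | zero => simp
  | @homogeneous d r =>
    induction x using Decomposition.inductionOn 𝓟 with
    | zero => simp
    | @homogeneous i x =>
      have hrx : (r : R) • (x : P) ∈ 𝓟 (d + i) := SetLike.GradedSMul.smul_mem r.2 x.2
      rw [degreeZeroPart_apply_of_mem _ x.2, degreeZeroPart_apply_of_mem _ hrx,
        LinearMap.toAddMonoidHom_coe, map_smul, coe_decompose_smul_add_of_mem ℳ r.2]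
    | add a b ha hb => rw [smul_add, map_add, ha, hb, map_add, smul_add]
  | add r s hr hs => rw [add_smul, map_add, hr, hs, add_smul]

def degreeZeroPartₗ [AddSubmonoidClass σR R] (𝒜 : ι → σR) [GradedRing 𝒜]
    (ℳ : ι → σM) [Decomposition ℳ] [SetLike.GradedSMul 𝒜 ℳ]
    (𝓟 : ι → σP) [Decomposition 𝓟] [SetLike.GradedSMul 𝒜 𝓟] (h : P →ₗ[R] M) : P →ₗ[R] M where
  toFun := degreeZeroPart ℳ 𝓟 h.toAddMonoidHom
  map_add' := map_add _
  map_smul' := degreeZeroPart_map_smul 𝒜 ℳ 𝓟 h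

end Module

end DirectSum

open DirectSum

theorem graded_lifting_of_projective_general
    (R : Type*) [Ring R] (𝒜 : ℤ → AddSubgroup R) [GradedRing 𝒜]
    (M N P : Type*)
    [AddCommGroup M] [Module R M] [AddCommGroup N] [Module R N]
    [AddCommGroup P] [Module R P]
    (ℳ : ℤ → AddSubgroup M) [SetLike.GradedSMul 𝒜 ℳ] [DirectSum.Decomposition ℳ]
    (𝒩 : ℤ → AddSubgroup N) [DirectSum.Decomposition 𝒩]
    (𝓟 : ℤ → AddSubgroup P) [SetLike.GradedSMul 𝒜 𝓟] [DirectSum.Decomposition 𝓟]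
    (hP : Module.Projective R P)
    (f : M →ₗ[R] N) (hf : Function.Surjective f)
    (hfdeg : ∀ i : ℤ, ∀ m ∈ ℳ i, f m ∈ 𝒩 i)
    (g : P →ₗ[R] N) (hgdeg : ∀ i : ℤ, ∀ x ∈ 𝓟 i, g x ∈ 𝒩 i) :
    ∃ h : P →ₗ[R] M, (∀ i : ℤ, ∀ x ∈ 𝓟 i, h x ∈ ℳ i) ∧ f ∘ₗ h = g := by
  obtain ⟨h₀, hfh₀⟩ := Module.projective_lifting_property f g hf
  refine ⟨degreeZeroPartₗ 𝒜 ℳ 𝓟 h₀, fun i x hx => degreeZeroPart_mem _ hx, ?_⟩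
  apply LinearMap.toAddMonoidHom_injective
  calc (f ∘ₗ degreeZeroPartₗ 𝒜 ℳ 𝓟 h₀).toAddMonoidHom
      = f.toAddMonoidHom.comp (degreeZeroPart ℳ 𝓟 h₀.toAddMonoidHom) := rfl
    _ = degreeZeroPart 𝒩 𝓟 (f ∘ₗ h₀).toAddMonoidHom := comp_degreeZeroPart _ hfdeg _
    _ = g.toAddMonoidHom := by rw [hfh₀, degreeZeroPart_eq_self hgdeg]

/-- Over a `ℤ`-graded ring, a graded module that is projective as an ungraded module
satisfies the graded lifting property: degree-preserving maps to the target of a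
degree-preserving surjection lift to degree-preserving maps. -/
theorem graded_lifting_of_projective
    (R : Type*) [Ring R] (𝒜 : ℤ → AddSubgroup R) [GradedRing 𝒜]
    (M N P : Type*)
    [AddCommGroup M] [Module R M] [AddCommGroup N] [Module R N]
    [AddCommGroup P] [Module R P]
    (ℳ : ℤ → AddSubgroup M) [SetLike.GradedSMul 𝒜 ℳ] [DirectSum.Decomposition ℳ]
    (𝒩 : ℤ → AddSubgroup N) [SetLike.GradedSMul 𝒜 𝒩] [DirectSum.Decomposition 𝒩]
    (𝓟 : ℤ → AddSubgroup P) [SetLike.GradedSMul 𝒜 𝓟] [DirectSum.Decomposition 𝓟]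
    (hP : Module.Projective R P)
    (f : M →ₗ[R] N) (hf : Function.Surjective f)
    (hfdeg : ∀ i : ℤ, ∀ m ∈ ℳ i, f m ∈ 𝒩 i)
    (g : P →ₗ[R] N) (hgdeg : ∀ i : ℤ, ∀ x ∈ 𝓟 i, g x ∈ 𝒩 i) :
    ∃ h : P →ₗ[R] M, (∀ i : ℤ, ∀ x ∈ 𝓟 i, h x ∈ ℳ i) ∧ f ∘ₗ h = g :=
  graded_lifting_of_projective_general R 𝒜 M N P ℳ 𝒩 𝓟 hP f hf hfdeg g hgdeg
end

section
/- Let R be a ring with a ℤ-grading 𝒜 making it a graded ring, and let M, N be graded R-modules (with gradings ℳ, 𝒩) with M finitely generated as an R-module. Then every R-linear map f : M → N is a finite sum of homogeneous maps: there exist a finite set S ⊆ ℤ and R-linear maps f_s : M → N for s ∈ S, each homogeneous of degree s (i.e., f_s(ℳ(i)) ⊆ 𝒩(i+s) for all i ∈ ℤ), such that f = Σ_{s∈S} f_s. -/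
/-!
The degree-`s` component of `f` sends `m ∈ ℳ i` to the degree-`(i + s)` part of `f m`. It is
`R`-linear because projecting onto `𝒩 j` commutes with multiplication by `r ∈ 𝒜 a` up to the
shift `j ↦ a + j`. For each `m`, the components of `f` at all sufficiently large finite sets of
degrees sum to `f m`; since `M` has finitely many generators, one finite set of degrees works for
all of them, and two linear maps that agree on generators are equal.
-/

open DirectSum Filter

namespace GradedModule

variable {ι R σA σM σN M N : Type*} [DecidableEq ι]
variable [Semiring R] [AddCommMonoid M] [Module R M] [AddCommMonoid N] [Module R N]
variable [SetLike σA R] [AddSubmonoidClass σA R]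
variable [SetLike σM M] [AddSubmonoidClass σM M] [SetLike σN N] [AddSubmonoidClass σN N]

section Proj

variable (ℳ : ι → σM) [Decomposition ℳ]

def proj (i : ι) : M →+ M :=
  (AddSubmonoidClass.subtype (ℳ i)).comp
    ((DFinsupp.evalAddMonoidHom i).comp (decomposeAddEquiv ℳ).toAddMonoidHom)

theorem proj_mem (i : ι) (m : M) : proj ℳ i m ∈ ℳ i := (decompose ℳ m i).2

theorem proj_of_mem {i j : ι} {m : M} (hm : m ∈ ℳ i) :
    proj ℳ j m = if i = j then m else 0 := by
  split_ifs with h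
  · exact h ▸ decompose_of_mem_same ℳ hm
  · exact decompose_of_mem_ne ℳ hm h

end Proj

theorem proj_smul_of_mem [AddLeftCancelMonoid ι] (𝒜 : ι → σA) (ℳ : ι → σM) [GradedRing 𝒜]
    [Decomposition ℳ] [SetLike.GradedSMul 𝒜 ℳ] {a : ι} {r : R} (hr : r ∈ 𝒜 a) (j : ι) (m : M) :
    proj ℳ (a + j) (r • m) = r • proj ℳ j m := by
  induction m using Decomposition.inductionOn ℳ with
  | zero => simp
  | @homogeneous i m =>
    have hrm : r • (m : M) ∈ ℳ (a + i) := SetLike.GradedSMul.smul_mem hr m.2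
    simp only [proj_of_mem ℳ hrm, proj_of_mem ℳ m.2, add_right_inj, smul_ite, smul_zero]
  | add m m' h h' => rw [smul_add, map_add, map_add, h, h', smul_add]

section Component

variable [AddCommGroup ι] (ℳ : ι → σM) (𝒩 : ι → σN) [Decomposition ℳ] [Decomposition 𝒩]

theorem eventually_sum_proj_add (i : ι) (n : N) :
    ∀ᶠ S in atTop, ∑ s ∈ S, proj 𝒩 (i + s) n = n := by
  induction n using Decomposition.inductionOn 𝒩 with
  | zero => simp
  | @homogeneous c n =>
    filter_upwards [eventually_ge_atTop {c - i}] with S hS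
    have hc : c - i ∈ S := Finset.singleton_subset_iff.1 hS
    simp only [proj_of_mem 𝒩 n.2, eq_comm (a := c), ← eq_sub_iff_add_eq', Finset.sum_ite_eq', hc,
      if_true]
  | add n n' h h' =>
    filter_upwards [h, h'] with S hS hS'
    simp only [map_add, Finset.sum_add_distrib, hS, hS']

def homogeneousComponent (f : M →+ N) (s : ι) : M →+ N :=
  (toAddMonoid fun i ↦ (proj 𝒩 (i + s)).comp (f.comp (AddSubmonoidClass.subtype (ℳ i)))).comp
    (decomposeAddEquiv ℳ).toAddMonoidHom

variable {ℳ} in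
theorem homogeneousComponent_apply_of_mem (f : M →+ N) (s : ι) {i : ι} {m : M} (hm : m ∈ ℳ i) :
    homogeneousComponent ℳ 𝒩 f s m = proj 𝒩 (i + s) (f m) := by
  simp [homogeneousComponent, decompose_of_mem ℳ hm]

variable {ℳ 𝒩} in
theorem homogeneousComponent_mem (f : M →+ N) (s : ι) {i : ι} {m : M} (hm : m ∈ ℳ i) :
    homogeneousComponent ℳ 𝒩 f s m ∈ 𝒩 (i + s) :=
  (homogeneousComponent_apply_of_mem 𝒩 f s hm).symm ▸ proj_mem 𝒩 _ _

theorem eventually_sum_homogeneousComponent (f : M →+ N) (m : M) :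
    ∀ᶠ S in atTop, ∑ s ∈ S, homogeneousComponent ℳ 𝒩 f s m = f m := by
  induction m using Decomposition.inductionOn ℳ with
  | zero => simp
  | @homogeneous i m =>
    simpa only [homogeneousComponent_apply_of_mem 𝒩 f _ m.2] using eventually_sum_proj_add 𝒩 i (f m)
  | add m m' h h' =>
    filter_upwards [h, h'] with S hS hS'
    simp only [map_add, Finset.sum_add_distrib, hS, hS']

variable (𝒜 : ι → σA) [GradedRing 𝒜] [SetLike.GradedSMul 𝒜 ℳ] [SetLike.GradedSMul 𝒜 𝒩]

include 𝒜 in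
theorem homogeneousComponent_smul (f : M →ₗ[R] N) (s : ι) (r : R) (m : M) :
    homogeneousComponent ℳ 𝒩 f s (r • m) = r • homogeneousComponent ℳ 𝒩 f s m := by
  induction r using Decomposition.inductionOn 𝒜 with
  | zero => simp
  | @homogeneous a r =>
    induction m using Decomposition.inductionOn ℳ with
    | zero => simp
    | @homogeneous i m =>
      have hrm : (r : R) • (m : M) ∈ ℳ (a + i) := SetLike.GradedSMul.smul_mem r.2 m.2
      rw [homogeneousComponent_apply_of_mem 𝒩 _ _ hrm, homogeneousComponent_apply_of_mem 𝒩 _ _ m.2,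
        AddMonoidHom.coe_coe, map_smul, add_assoc, proj_smul_of_mem 𝒜 𝒩 r.2]
    | add m m' h h' => rw [smul_add, map_add, h, h', map_add, smul_add]
  | add r r' h h' => rw [add_smul, map_add, h, h', add_smul]

def homogeneousComponentₗ (f : M →ₗ[R] N) (s : ι) : M →ₗ[R] N where
  toFun := homogeneousComponent ℳ 𝒩 f s
  map_add' := map_add _
  map_smul' := homogeneousComponent_smul ℳ 𝒩 𝒜 f s

@[simp]
theorem homogeneousComponentₗ_apply (f : M →ₗ[R] N) (s : ι) (m : M) :
    homogeneousComponentₗ ℳ 𝒩 𝒜 f s m = homogeneousComponent ℳ 𝒩 f s m := rfl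

end Component

end GradedModule

/-- Over a `ℤ`-graded ring, every `R`-linear map from a finitely generated graded
module `M` to a graded module `N` is a finite sum of homogeneous maps. -/
theorem linearMap_eq_finite_sum_of_homogeneous
    (R : Type*) [Ring R] (𝒜 : ℤ → AddSubgroup R) [GradedRing 𝒜]
    (M N : Type*)
    [AddCommGroup M] [Module R M] [AddCommGroup N] [Module R N]
    (ℳ : ℤ → AddSubgroup M) [SetLike.GradedSMul 𝒜 ℳ] [DirectSum.Decomposition ℳ]
    (𝒩 : ℤ → AddSubgroup N) [SetLike.GradedSMul 𝒜 𝒩] [DirectSum.Decomposition 𝒩]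
    (hM : Module.Finite R M)
    (f : M →ₗ[R] N) :
    ∃ (S : Finset ℤ) (g : ℤ → (M →ₗ[R] N)),
      (∀ s ∈ S, ∀ i : ℤ, ∀ m ∈ ℳ i, g s m ∈ 𝒩 (i + s)) ∧
      f = ∑ s ∈ S, g s := by
  obtain ⟨G, hG⟩ := hM.fg_top
  obtain ⟨S, hS⟩ := ((eventually_all_finset G).2 fun m _ ↦
    GradedModule.eventually_sum_homogeneousComponent ℳ 𝒩 (f : M →+ N) m).exists
  refine ⟨S, GradedModule.homogeneousComponentₗ ℳ 𝒩 𝒜 f,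
    fun s _ i m hm ↦ GradedModule.homogeneousComponent_mem (f : M →+ N) s hm,
    LinearMap.ext_on hG fun m hm ↦ ?_⟩
  simp only [LinearMap.sum_apply, GradedModule.homogeneousComponentₗ_apply]
  exact (hS m hm).symm
end
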